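/- arXiv:2008.00543 — 5 statements merged into one kernel-verified Lean document; each statement's English description precedes it below -/
import Mathlib

section
/- Let G be a Lie group with Lie algebra 𝔤 semisimple, with Killing form K, and let g be a left-invariant semi-Riemannian metric on G corresponding to a nondegenerate symmetric bilinear form B on 𝔤 with associated K-symmetric isomorphism A (i.e. B(x,y) = K(x, A y)). A left-invariant vector field Z is Killing if and only if A ∘ ad_z = ad_z ∘ A, where z = Z_e. -/
/-!
Writing `B = K.compl₂ A`, skew-adjointness of `ad z` for the Killing form `K` and
`K`-symmetry of `A` give `B ⁅z, x⁆ y + B ⁅z, y⁆ x = K x (A ⁅z, y⁆ - ⁅z, A y⁆)`. The Killing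
form inherits nondegeneracy from `B` because `A` is invertible, so the left side vanishes for all
`x` exactly when `A ⁅z, y⁆ = ⁅z, A y⁆`.
-/

namespace LinearMap

theorem SeparatingRight.of_compl₂_equiv {R M M₂ M₃ N : Type*} [CommSemiring R]
    [AddCommMonoid M] [Module R M] [AddCommMonoid M₂] [Module R M₂] [AddCommMonoid M₃]
    [Module R M₃] [AddCommMonoid N] [Module R N]
    {K : M →ₗ[R] M₃ →ₗ[R] N} {e : M₂ ≃ₗ[R] M₃} (h : (K.compl₂ e.toLinearMap).SeparatingRight) :
    K.SeparatingRight := fun y hy ↦ by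
  simpa using congrArg e (h (e.symm y) (by simpa using hy))

namespace BilinForm

variable {R L : Type*} [CommRing R] [LieRing L] [LieAlgebra R L] {K : LinearMap.BilinForm R L}

theorem compl₂_lie_add_compl₂_lie (hK : K.IsSymm) (hinv : K.lieInvariant L)
    {A : Module.End R L} (hA : IsAdjointPair K K A A) (z x y : L) :
    K.compl₂ A ⁅z, x⁆ y + K.compl₂ A ⁅z, y⁆ x = K x (A ⁅z, y⁆ - ⁅z, A y⁆) := by
  simp only [compl₂_apply, map_sub, hinv z x (A y), hK.eq ⁅z, y⁆ (A x), hA x ⁅z, y⁆]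
  ring

theorem compl₂_lie_add_compl₂_lie_eq_zero_iff (hK : K.IsSymm) (hinv : K.lieInvariant L)
    (hsep : K.SeparatingRight) {A : Module.End R L} (hA : IsAdjointPair K K A A) (z : L) :
    (∀ x y, K.compl₂ A ⁅z, x⁆ y + K.compl₂ A ⁅z, y⁆ x = 0) ↔
      A ∘ₗ LieAlgebra.ad R L z = LieAlgebra.ad R L z ∘ₗ A := by
  simp only [compl₂_lie_add_compl₂_lie hK hinv hA, LinearMap.ext_iff, LinearMap.comp_apply,
    LieAlgebra.ad_apply]
  exact ⟨fun h y ↦ sub_eq_zero.mp (hsep _ fun x ↦ h x y),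
    fun h x y ↦ by rw [h, sub_self, map_zero]⟩

end BilinForm

end LinearMap

theorem stmt0_general {L : Type*} [LieRing L] [LieAlgebra ℝ L]
    (B : LinearMap.BilinForm ℝ L)
    (hBnd : B.Nondegenerate)
    (A : L ≃ₗ[ℝ] L)
    (hBA : ∀ x y : L, B x y = killingForm ℝ L x (A y))
    (hAsymm : ∀ x y : L, killingForm ℝ L (A x) y = killingForm ℝ L x (A y))
    (z : L) :
    (∀ x y : L, B ⁅z, x⁆ y + B ⁅z, y⁆ x = 0) ↔
      A.toLinearMap ∘ₗ LieAlgebra.ad ℝ L z = LieAlgebra.ad ℝ L z ∘ₗ A.toLinearMap := by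
  obtain rfl : B = (killingForm ℝ L).compl₂ A.toLinearMap := LinearMap.ext₂ hBA
  exact LinearMap.BilinForm.compl₂_lie_add_compl₂_lie_eq_zero_iff
    (LinearMap.BilinForm.isSymm_iff.mpr (LieModule.traceForm_isSymm ℝ L L))
    (LieModule.traceForm_lieInvariant ℝ L L) hBnd.2.of_compl₂_equiv hAsymm z

/-- A left-invariant vector field `Z` on a semisimple Lie group with left-invariant
semi-Riemannian metric `B` (with `B x y = K x (A y)` for the `K`-symmetric isomorphism `A`)
is Killing (i.e. `ad z` is skew-symmetric w.r.t. `B`) iff `A ∘ ad z = ad z ∘ A`. -/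
theorem stmt0 {L : Type*} [LieRing L] [LieAlgebra ℝ L] [Module.Finite ℝ L]
    [LieAlgebra.IsSemisimple ℝ L]
    (B : LinearMap.BilinForm ℝ L)
    (hBsymm : ∀ x y : L, B x y = B y x)
    (hBnd : B.Nondegenerate)
    (A : L ≃ₗ[ℝ] L)
    (hBA : ∀ x y : L, B x y = killingForm ℝ L x (A y))
    (hAsymm : ∀ x y : L, killingForm ℝ L (A x) y = killingForm ℝ L x (A y))
    (z : L) :
    (∀ x y : L, B ⁅z, x⁆ y + B ⁅z, y⁆ x = 0) ↔
      A.toLinearMap ∘ₗ LieAlgebra.ad ℝ L z = LieAlgebra.ad ℝ L z ∘ₗ A.toLinearMap :=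
  stmt0_general B hBnd A hBA hAsymm z
end

section
/- Let 𝔤 be a real semisimple Lie algebra with Killing form K, A a K-symmetric isomorphism of 𝔤, and z ∈ 𝔤 with A ∘ ad_z = ad_z ∘ A. If u : I → 𝔤 is a differentiable curve satisfying the Euler equation u'(t) = [u(t), A⁻¹ u(t)], then the function t ↦ K(u(t), z) is constant. -/
/-- Along any solution of the Euler equation `u' = [u, A⁻¹ u]` on an interval `I`
(differentiability expressed componentwise, via arbitrary linear functionals),
the function `t ↦ K(u t, z)` is constant, provided `A ∘ ad z = ad z ∘ A`. -/
theorem stmt2 {L : Type*} [LieRing L] [LieAlgebra ℝ L] [Module.Finite ℝ L]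
    [LieAlgebra.IsSemisimple ℝ L]
    (A : L ≃ₗ[ℝ] L)
    (hAsymm : ∀ x y : L, killingForm ℝ L (A x) y = killingForm ℝ L x (A y))
    (z : L)
    (hz : A.toLinearMap ∘ₗ LieAlgebra.ad ℝ L z = LieAlgebra.ad ℝ L z ∘ₗ A.toLinearMap)
    (I : Set ℝ) (hI : I.OrdConnected)
    (u : ℝ → L)
    (hu : ∀ (f : L →ₗ[ℝ] ℝ), ∀ t ∈ I,
      HasDerivAt (fun τ => f (u τ)) (f ⁅u t, A.symm (u t)⁆) t) :
    ∀ s ∈ I, ∀ t ∈ I, killingForm ℝ L (u s) z = killingForm ℝ L (u t) z := by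
  -- A.symm commutes with ad z
  have hsymm_comm : ∀ x : L, A.symm ⁅z, x⁆ = ⁅z, A.symm x⁆ := by
    intro x
    have := LinearMap.congr_fun hz (A.symm x)
    simp only [LinearMap.comp_apply, LieAlgebra.ad_apply, LinearEquiv.coe_coe,
      A.apply_symm_apply] at this
    exact (A.symm_apply_eq.mpr this.symm)
  -- A.symm is K-symmetric
  have hAsymm' : ∀ x y : L, killingForm ℝ L x (A.symm y) = killingForm ℝ L (A.symm x) y := by
    intro x y
    have := hAsymm (A.symm x) (A.symm y)
    simpa [A.apply_symm_apply] using this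
  -- the key vanishing
  have key : ∀ a : L, killingForm ℝ L ⁅a, A.symm a⁆ z = 0 := by
    intro a
    have h1 : killingForm ℝ L ⁅a, A.symm a⁆ z = - killingForm ℝ L (A.symm ⁅z, a⁆) a := by
      rw [LieModule.traceForm_apply_lie_apply]
      have : (⁅A.symm a, z⁆ : L) = - A.symm ⁅z, a⁆ := by
        rw [hsymm_comm, lie_skew]
      rw [this, map_neg, hAsymm' a ⁅z, a⁆, ← hAsymm' ⁅z, a⁆ a]
      exact neg_inj.mpr (LieModule.traceForm_comm ℝ L L _ _)
    have h2 : killingForm ℝ L ⁅a, A.symm a⁆ z = killingForm ℝ L (A.symm ⁅z, a⁆) a := by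
      rw [LieModule.traceForm_comm, ← LieModule.traceForm_apply_lie_apply,
        ← hAsymm', LieModule.traceForm_comm]
    have := h1.symm.trans h2
    linarith [h1, h2, this]
  -- the function and its zero derivative
  set g : ℝ → ℝ := fun τ => killingForm ℝ L (u τ) z with hg
  have hderiv : ∀ t ∈ I, HasDerivAt g 0 t := by
    intro t ht
    have := hu ((killingForm ℝ L).flip z) t ht
    simpa [g, LinearMap.flip_apply, key (u t)] using this
  -- constancy
  have main : ∀ s ∈ I, ∀ t ∈ I, s ≤ t → g s = g t := by
    intro s hs t ht hst
    have hIcc : Set.Icc s t ⊆ I := hI.out hs ht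
    have hcont : ContinuousOn g (Set.Icc s t) := fun y hy =>
      ((hderiv y (hIcc hy)).continuousAt).continuousWithinAt
    have hder : ∀ y ∈ Set.Ico s t, HasDerivWithinAt g 0 (Set.Ici y) y := fun y hy =>
      (hderiv y (hIcc ⟨hy.1, hy.2.le⟩)).hasDerivWithinAt
    exact (constant_of_has_deriv_right_zero hcont hder t ⟨hst, le_rfl⟩).symm
  intro s hs t ht
  rcases le_total s t with h | h
  · exact main s hs t ht h
  · exact (main t ht s hs h).symm
end

section
/- Let 𝔤 = sl₂(ℝ) and let {x, y, ξ} be an sl₂-triple, i.e. [ξ,x] = 2x, [ξ,y] = -2y, [x,y] = ξ. Let A : 𝔤 → 𝔤 be a linear isomorphism symmetric with respect to the Killing form K, and suppose z ∈ 𝔤 satisfies A ∘ ad_z = ad_z ∘ A and [x, A⁻¹ x] = x. If K(z, x) = 0 and z ∈ span{x, ξ}, then z = 0. -/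
set_option maxHeartbeats 1000000


open LieAlgebra.SpecialLinear

/-- In `sl₂(ℝ)`: given an `sl₂`-triple `{x, y, ξ}`, a `K`-symmetric isomorphism `A`
commuting with `ad z`, an idempotent `x` of the Euler field (`[x, A⁻¹x] = x`),
if `K(z, x) = 0` and `z ∈ span{x, ξ}`, then `z = 0`. -/
theorem stmt5
    (x y ξ : sl (Fin 2) ℝ)
    (hx : ⁅ξ, x⁆ = (2 : ℝ) • x)
    (hy : ⁅ξ, y⁆ = (-2 : ℝ) • y)
    (hxy : ⁅x, y⁆ = ξ)
    (A : sl (Fin 2) ℝ ≃ₗ[ℝ] sl (Fin 2) ℝ)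
    (hAsymm : ∀ a b : sl (Fin 2) ℝ,
      killingForm ℝ (sl (Fin 2) ℝ) (A a) b = killingForm ℝ (sl (Fin 2) ℝ) a (A b))
    (z : sl (Fin 2) ℝ)
    (hz : A.toLinearMap ∘ₗ LieAlgebra.ad ℝ (sl (Fin 2) ℝ) z
        = LieAlgebra.ad ℝ (sl (Fin 2) ℝ) z ∘ₗ A.toLinearMap)
    (hidem : ⁅x, A.symm x⁆ = x)
    (hKzx : killingForm ℝ (sl (Fin 2) ℝ) z x = 0)
    (hspan : z ∈ Submodule.span ℝ {x, ξ}) :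
    z = 0 := by
  have hsymm : ∀ v : sl (Fin 2) ℝ, ⁅z, A.symm v⁆ = A.symm ⁅z, v⁆ := by
    intro v
    have h := LinearMap.congr_fun hz (A.symm v)
    simp only [LinearMap.comp_apply, LinearEquiv.coe_coe, LieAlgebra.ad_apply,
      LinearEquiv.apply_symm_apply] at h
    apply A.injective
    simpa using h
  rcases eq_or_ne x 0 with hx0 | hx0
  · have hξ : ξ = 0 := by rw [← hxy, hx0]; simp
    rw [hx0, hξ] at hspan
    rw [Submodule.mem_span_pair] at hspan
    obtain ⟨a, b, hab⟩ := hspan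
    simp at hab
    exact hab.symm
  · rw [Submodule.mem_span_pair] at hspan
    obtain ⟨α, β, hzab⟩ := hspan
    have hzx : ⁅z, x⁆ = (2*β) • x := by
      rw [← hzab]
      simp [add_lie, smul_lie, hx, smul_smul, mul_comm]
    have hzw : ⁅z, A.symm x⁆ = (2*β) • A.symm x := by
      rw [hsymm, hzx, map_smul]
    have key : ⁅z, x⁆ = (4*β) • x := by
      conv_lhs => rw [← hidem]
      rw [leibniz_lie, hzx, hzw, smul_lie, lie_smul, hidem, ← add_smul]
      ring_nf
    have hβ : β = 0 := by
      have h1 : (2*β) • x = (4*β) • x := hzx.symm.trans key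
      have h2 : ((2*β) - (4*β)) • x = 0 := by rw [sub_smul, h1, sub_self]
      rcases smul_eq_zero.mp h2 with h | h
      · linarith
      · exact absurd h hx0
    have hz' : z = α • x := by rw [← hzab, hβ, zero_smul, add_zero]
    have hzw0 : ⁅z, A.symm x⁆ = 0 := by rw [hzw, hβ, mul_zero, zero_smul]
    rw [hz', smul_lie, hidem] at hzw0
    rw [hz', hzw0]
end

section
/- Let V be a finite-dimensional real vector space with a Lorentzian symmetric bilinear form B, and let T : V → V be a linear operator that is skew-symmetric with respect to B and nilpotent with T^{m-1} ≠ 0, T^m = 0. Then m ≤ 3; more precisely, setting k = ⌈m/2⌉, the image of T^k is a totally isotropic subspace of V, hence has dimension at most 1. -/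
/-!
Skew-symmetry gives `B (T^k x) (T^k y) = ± B x (T^(2k) y)`, which vanishes once `2k ≥ m`, so the
range of `T^k` is totally isotropic. In a Lorentzian space the orthogonal complement of a timelike
vector `z` is positive definite, so `w ↦ B z w` is injective on an isotropic subspace, which
therefore has dimension at most 1. Finally, if `m ≥ 4` then `k + 2 ≤ m`, and for `T^(m-1) x ≠ 0`
the vectors `T^k x` and `T^(m-1) x = T^(m-1-k) (T^k x)` are independent in the range of `T^k`.
-/

/-- A symmetric bilinear form is Lorentzian: nondegenerate, symmetric, admits a timelike
vector, and every subspace on which it is negative definite has dimension at most 1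
(i.e. it has index 1). -/
def IsLorentzian {V : Type*} [AddCommGroup V] [Module ℝ V]
    (B : LinearMap.BilinForm ℝ V) : Prop :=
  B.Nondegenerate ∧ (∀ x y : V, B x y = B y x) ∧ (∃ x : V, B x x < 0) ∧
    ∀ W : Submodule ℝ V, (∀ w ∈ W, w ≠ 0 → B w w < 0) → Module.finrank ℝ W ≤ 1

namespace LinearMap

variable {R M M₂ : Type*} [CommRing R] [AddCommGroup M] [Module R M] [AddCommGroup M₂]
  [Module R M₂] {B : M →ₗ[R] M →ₗ[R] M₂}

theorem IsAdjointPair.pow {f g : Module.End R M} (h : IsAdjointPair B B f g) :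
    ∀ n : ℕ, IsAdjointPair B B ⇑(f ^ n) ⇑(g ^ n)
  | 0 => isAdjointPair_one
  | n + 1 => by rw [pow_succ, pow_succ']; exact (h.pow n).mul h

theorem apply_pow_pow_eq_zero_of_isAdjointPair_neg {T : Module.End R M}
    (hskew : IsAdjointPair B B T ⇑(-T)) {m k : ℕ} (hTm : T ^ m = 0) (hmk : m ≤ 2 * k)
    (x y : M) : B ((T ^ k) x) ((T ^ k) y) = 0 := by
  rw [hskew.pow k x, ← Module.End.mul_apply, neg_pow, mul_assoc, ← pow_add,
    pow_eq_zero_of_le (by omega) hTm, mul_zero, zero_apply, map_zero]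

end LinearMap

theorem LinearMap.BilinForm.apply_smul_add_smul_self {R M : Type*} [CommRing R] [AddCommGroup M]
    [Module R M] {B : LinearMap.BilinForm R M} (hsym : ∀ x y, B x y = B y x) (a b : R)
    (x y : M) : B (a • x + b • y) (a • x + b • y) =
      a ^ 2 * B x x + 2 * a * b * B x y + b ^ 2 * B y y := by
  simp only [map_add, map_smul, LinearMap.add_apply, LinearMap.smul_apply, smul_eq_mul,
    hsym y x]
  ring

section Nilpotent

variable {K V : Type*} [DivisionRing K] [AddCommGroup V] [Module K V]

theorem LinearMap.linearIndependent_pair_apply {f : V →ₗ[K] V} {u : V} (hu : f u ≠ 0)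
    (hfu : f (f u) = 0) : LinearIndependent K ![u, f u] := by
  rw [LinearIndependent.pair_iff]
  intro a b hab
  have ha : a = 0 := by
    simpa [hfu, hu] using congrArg f hab
  subst ha
  simpa [hu] using hab

theorem two_le_finrank_range_pow [FiniteDimensional K V] {T : Module.End K V} {m k : ℕ}
    (hTm1 : T ^ (m - 1) ≠ 0) (hTm : T ^ m = 0) (hkm : k + 2 ≤ m) :
    2 ≤ Module.finrank K (LinearMap.range (T ^ k)) := by
  obtain ⟨x, hx⟩ : ∃ x, (T ^ (m - 1)) x ≠ 0 := by
    by_contra! h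
    exact hTm1 (LinearMap.ext h)
  have hshift : (T ^ (m - 1 - k)) ((T ^ k) x) = (T ^ (m - 1)) x := by
    rw [← Module.End.mul_apply, ← pow_add, Nat.sub_add_cancel (by omega)]
  have hli : LinearIndependent K ![(T ^ k) x, (T ^ (m - 1 - k)) ((T ^ k) x)] := by
    refine LinearMap.linearIndependent_pair_apply (hshift ▸ hx) ?_
    rw [hshift, ← Module.End.mul_apply, ← pow_add, pow_eq_zero_of_le (by omega) hTm,
      LinearMap.zero_apply]
  have hspan : Submodule.span K (Set.range ![(T ^ k) x, (T ^ (m - 1 - k)) ((T ^ k) x)]) ≤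
      LinearMap.range (T ^ k) := by
    rw [Submodule.span_le, Set.range_subset_iff, Fin.forall_fin_two]
    refine ⟨⟨x, rfl⟩, ⟨(T ^ (m - 1 - k)) x, ?_⟩⟩
    simp only [Matrix.cons_val_one, Matrix.cons_val_zero, ← Module.End.mul_apply, ← pow_add,
      add_comm]
  simpa [finrank_span_eq_card hli] using Submodule.finrank_mono hspan

end Nilpotent

namespace IsLorentzian

variable {V : Type*} [AddCommGroup V] [Module ℝ V] {B : LinearMap.BilinForm ℝ V}
  (hB : IsLorentzian B) {z : V}
include hB

/-- If `B y y < 0` as well, `span {z, y}` would be a negative definite plane. -/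
theorem nonneg_of_orthogonal_timelike (hz : B z z < 0) {y : V} (hzy : B z y = 0) :
    0 ≤ B y y := by
  obtain ⟨-, hsym, -, hidx⟩ := hB
  by_contra! hy
  have hquad (a b : ℝ) : B (a • z + b • y) (a • z + b • y) = a ^ 2 * B z z + b ^ 2 * B y y := by
    rw [LinearMap.BilinForm.apply_smul_add_smul_self hsym, hzy]; ring
  have hneg (a b : ℝ) (hab : a ≠ 0 ∨ b ≠ 0) : B (a • z + b • y) (a • z + b • y) < 0 := by
    rw [hquad]
    rcases hab with ha | hb
    · linarith [mul_neg_of_pos_of_neg (pow_two_pos_of_ne_zero ha) hz,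
        mul_nonpos_of_nonneg_of_nonpos (sq_nonneg b) hy.le]
    · linarith [mul_neg_of_pos_of_neg (pow_two_pos_of_ne_zero hb) hy,
        mul_nonpos_of_nonneg_of_nonpos (sq_nonneg a) hz.le]
  have hli : LinearIndependent ℝ ![z, y] := by
    rw [LinearIndependent.pair_iff]
    intro a b hab
    by_contra! h
    have := hneg a b (by tauto)
    simp [hab] at this
  have hW := hidx (Submodule.span ℝ {z, y}) <| by
    intro w hw hw0
    obtain ⟨a, b, rfl⟩ := Submodule.mem_span_pair.mp hw
    exact hneg a b (by by_contra! h; simp [h.1, h.2] at hw0)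
  have := finrank_span_eq_card hli
  rw [Matrix.range_cons_cons_empty] at this
  simp [this] at hW

/-- `z^⊥` is positive semidefinite, so by Cauchy–Schwarz a null vector of `z^⊥` is orthogonal to
all of `z^⊥`, hence to all of `V = z^⊥ + ℝ z`, and nondegeneracy forces it to vanish. -/
theorem eq_zero_of_orthogonal_timelike_of_isotropic (hz : B z z < 0) {y : V} (hzy : B z y = 0)
    (hyy : B y y = 0) : y = 0 := by
  have hsym := hB.2.1
  refine hB.1.1 y fun v ↦ ?_
  set v' := v - (B z v / B z z) • z
  have hzv' : B z v' = 0 := by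
    simp only [v', map_sub, map_smul, smul_eq_mul, div_mul_cancel₀ _ hz.ne, sub_self]
  have hquad (t : ℝ) : 0 ≤ B v' v' * (t * t) + 2 * B y v' * t + 0 := by
    have := hB.nonneg_of_orthogonal_timelike hz (y := (1 : ℝ) • y + t • v') (by simp [hzy, hzv'])
    rw [LinearMap.BilinForm.apply_smul_add_smul_self hsym, hyy] at this
    linarith
  have hyv' : B y v' = 0 := by
    have := discrim_le_zero hquad
    rw [discrim] at this
    nlinarith [sq_nonneg (B y v')]
  have hv : v = v' + (B z v / B z z) • z := by simp [v']
  rw [hv, map_add, map_smul, hyv', hsym y z, hzy, smul_zero, add_zero]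

theorem finrank_le_one_of_isotropic (W : Submodule ℝ V) (hW : ∀ w ∈ W, B w w = 0) :
    Module.finrank ℝ W ≤ 1 := by
  obtain ⟨z, hz⟩ := hB.2.2.1
  have hinj : Function.Injective ((B z).domRestrict W) := by
    rw [← LinearMap.ker_eq_bot, LinearMap.ker_eq_bot']
    intro w hw
    exact Subtype.ext <| hB.eq_zero_of_orthogonal_timelike_of_isotropic hz hw (hW w w.2)
  simpa using LinearMap.finrank_le_finrank_of_injective hinj

end IsLorentzian

theorem stmt8_general {V : Type*} [AddCommGroup V] [Module ℝ V] [FiniteDimensional ℝ V]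
    (B : LinearMap.BilinForm ℝ V) (hB : IsLorentzian B)
    (T : V →ₗ[ℝ] V)
    (hskew : ∀ x y : V, B (T x) y = - B x (T y))
    (m : ℕ)
    (hTm1 : T ^ (m - 1) ≠ 0) (hTm : T ^ m = 0) :
    m ≤ 3 ∧
      (∀ x y : V, B ((T ^ ((m + 1) / 2)) x) ((T ^ ((m + 1) / 2)) y) = 0) ∧
      Module.finrank ℝ (LinearMap.range (T ^ ((m + 1) / 2))) ≤ 1 := by
  have hiso : ∀ x y : V, B ((T ^ ((m + 1) / 2)) x) ((T ^ ((m + 1) / 2)) y) = 0 :=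
    LinearMap.apply_pow_pow_eq_zero_of_isAdjointPair_neg
      (fun x y ↦ by simpa using hskew x y) hTm (by omega)
  have hrank : Module.finrank ℝ (LinearMap.range (T ^ ((m + 1) / 2))) ≤ 1 :=
    hB.finrank_le_one_of_isotropic _ (by rintro _ ⟨x, rfl⟩; exact hiso x x)
  refine ⟨?_, hiso, hrank⟩
  by_contra! hm
  have := two_le_finrank_range_pow hTm1 hTm (k := (m + 1) / 2) (by omega)
  omega

/-- If `T` is a `B`-skew-symmetric nilpotent operator on a Lorentzian space with
`T^(m-1) ≠ 0` and `T^m = 0`, then `m ≤ 3`; more precisely, with `k = ⌈m/2⌉`, the image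
of `T^k` is totally isotropic and hence has dimension at most 1. -/
theorem stmt8 {V : Type*} [AddCommGroup V] [Module ℝ V] [FiniteDimensional ℝ V]
    (B : LinearMap.BilinForm ℝ V) (hB : IsLorentzian B)
    (T : V →ₗ[ℝ] V)
    (hskew : ∀ x y : V, B (T x) y = - B x (T y))
    (m : ℕ) (hm : 1 ≤ m)
    (hTm1 : T ^ (m - 1) ≠ 0) (hTm : T ^ m = 0) :
    m ≤ 3 ∧
      (∀ x y : V, B ((T ^ ((m + 1) / 2)) x) ((T ^ ((m + 1) / 2)) y) = 0) ∧
      Module.finrank ℝ (LinearMap.range (T ^ ((m + 1) / 2))) ≤ 1 :=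
  stmt8_general B hB T hskew m hTm1 hTm
end

section
/- Let 𝔤 be a real semisimple Lie algebra with Killing form K, A a K-symmetric isomorphism of 𝔤 defining a metric via B(x,y) = K(x,Ay), and F(x) = [x, A⁻¹x] the Euler field. If u is a GCS of F with ratio r ≠ 1 (u(s) = r u(0), r > 0), then K(u(t), A⁻¹u(t)) = 0 for all t, and u(t) is nilpotent (ad_{u(t)} is a nilpotent operator) for all t. -/
/-!
Along a solution of `u' = [u, A⁻¹u]`, the matrices `X = ad u` and `Y = ad (A⁻¹u)` satisfy the Lax
equation `X' = [X, Y]`, so every `tr (ad u)^k` is constant; `K(u, A⁻¹u)` is constant because `K` is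
invariant and `A⁻¹` is `K`-symmetric. These first integrals are homogeneous of degrees `2` and `k`,
so `u s = r • u 0` with `0 < r ≠ 1` forces them to vanish. In characteristic zero an endomorphism
all of whose powers are traceless is nilpotent: over an algebraic closure,
`tr f^k = ∑ μ, dim V_μ * μ^k` over the generalized eigenspaces, and a polynomial vanishing at `0` and
at all eigenvalues but one isolates each `dim V_μ` with `μ ≠ 0`.
-/

open Polynomial in
theorem Finset.eq_zero_of_forall_sum_mul_pow_eq_zero {R : Type*} [CommRing R] [IsDomain R]
    {S : Finset R} {d : R → R} (h : ∀ k ≠ 0, ∑ ν ∈ S, d ν * ν ^ k = 0)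
    {μ : R} (hμS : μ ∈ S) (hμ : μ ≠ 0) : d μ = 0 := by
  classical
  set p : R[X] := X * ∏ ν ∈ S.erase μ, (X - C ν)
  have hsum : ∑ ν ∈ S, d ν * p.eval ν = 0 := by
    simp_rw [eval_eq_sum_range, Finset.mul_sum, Finset.sum_comm (s := S)]
    refine Finset.sum_eq_zero fun k _ => ?_
    rcases eq_or_ne k 0 with rfl | hk
    · simp [p, coeff_zero_eq_eval_zero]
    · simp_rw [mul_left_comm (d _), ← Finset.mul_sum, h k hk, mul_zero]
  rw [Finset.sum_eq_single_of_mem μ hμS fun ν hν hne => by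
    simp [p, eval_prod, Finset.prod_eq_zero (Finset.mem_erase.2 ⟨hne, hν⟩) (sub_self ν)]] at hsum
  refine (mul_eq_zero.1 hsum).resolve_right ?_
  simpa [p, eval_prod, Finset.prod_ne_zero_iff, sub_eq_zero, hμ] using fun ν hν _ => Ne.symm hν

theorem LinearMap.trace_pow_of_isNilpotent_sub_algebraMap {R M : Type*} [CommRing R]
    [IsReduced R] [AddCommGroup M] [Module R M] [Module.Free R M] [Module.Finite R M]
    {g : Module.End R M} {μ : R} (hg : IsNilpotent (g - algebraMap R _ μ)) (k : ℕ) :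
    trace R M (g ^ k) = μ ^ k * Module.finrank R M := by
  induction k with
  | zero => simp
  | succ k ih =>
    rw [pow_succ, Module.End.mul_eq_comp,
      trace_comp_eq_mul_of_commute_of_isNilpotent μ ((Commute.refl g).pow_left k) hg, ih]
    ring

namespace Module.End

variable {K V : Type*} [Field K] [CharZero K] [AddCommGroup V] [Module K V]
  [FiniteDimensional K V]

theorem isNilpotent_of_forall_trace_pow_eq_zero_of_isAlgClosed [IsAlgClosed K] {f : End K V}
    (h : ∀ k ≠ 0, LinearMap.trace K V (f ^ k) = 0) : IsNilpotent f := by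
  classical
  have hfin : {μ | f.maxGenEigenspace μ ≠ ⊥}.Finite :=
    WellFoundedGT.finite_ne_bot_of_iSupIndep f.independent_maxGenEigenspace
  have hds := DirectSum.isInternal_submodule_of_iSupIndep_of_iSup_eq_top
    f.independent_maxGenEigenspace f.iSup_maxGenEigenspace_eq_top
  have htrace (k : ℕ) : LinearMap.trace K V (f ^ k) =
      ∑ μ ∈ hfin.toFinset, (finrank K (f.maxGenEigenspace μ) : K) * μ ^ k := by
    rw [LinearMap.trace_eq_sum_trace_restrict' hds hfin
      fun μ => mapsTo_maxGenEigenspace_of_comm ((Commute.refl f).pow_right k) μ]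
    refine Finset.sum_congr rfl fun μ _ => ?_
    have hnil : IsNilpotent (f.restrict (mapsTo_maxGenEigenspace_of_comm rfl μ) -
        algebraMap K _ μ) := by
      convert f.isNilpotent_restrict_maxGenEigenspace_sub_algebraMap μ using 1
      ext; rfl
    rw [← pow_restrict k (mapsTo_maxGenEigenspace_of_comm rfl μ),
      LinearMap.trace_pow_of_isNilpotent_sub_algebraMap hnil, mul_comm]
  have hbot (μ : K) (hμ : μ ≠ 0) : f.maxGenEigenspace μ = ⊥ := by
    by_contra hne
    have := Finset.eq_zero_of_forall_sum_mul_pow_eq_zero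
      (fun k hk => (htrace k).symm.trans (h k hk)) (hfin.mem_toFinset.2 hne) hμ
    exact hne (Submodule.finrank_eq_zero.1 (Nat.cast_eq_zero.1 this))
  have htop : f.maxGenEigenspace 0 = ⊤ := by
    refine eq_top_iff.2 (f.iSup_maxGenEigenspace_eq_top ▸ iSup_le fun μ => ?_)
    rcases eq_or_ne μ 0 with rfl | hμ
    · exact le_rfl
    · simp [hbot μ hμ]
  rw [maxGenEigenspace_eq, genEigenspace_zero_nat, LinearMap.ker_eq_top] at htop
  exact ⟨_, htop⟩

theorem isNilpotent_of_forall_trace_pow_eq_zero {f : End K V}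
    (h : ∀ k ≠ 0, LinearMap.trace K V (f ^ k) = 0) : IsNilpotent f := by
  rw [← IsNilpotent.map_iff (f := baseChangeHom K (AlgebraicClosure K) V)
    (LinearMap.baseChangeHom_injective K V _)]
  refine isNilpotent_of_forall_trace_pow_eq_zero_of_isAlgClosed fun k hk => ?_
  rw [← map_pow]
  exact (LinearMap.trace_baseChange (f ^ k) _).trans (by rw [h k hk, map_zero])

end Module.End

theorem Set.OrdConnected.eq_of_hasDerivAt_eq_zero {E : Type*} [NormedAddCommGroup E]
    [NormedSpace ℝ E] {I : Set ℝ} (hI : I.OrdConnected) {g : ℝ → E}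
    (hg : ∀ t ∈ I, HasDerivAt g 0 t) {a b : ℝ} (ha : a ∈ I) (hb : b ∈ I) : g a = g b := by
  have := hI.convex.norm_image_sub_le_of_norm_hasDerivWithin_le
    (C := 0) (fun t ht => (hg t ht).hasDerivWithinAt) (fun _ _ => by simp) ha hb
  simpa [sub_eq_zero, eq_comm] using this

theorem Set.OrdConnected.eq_zero_of_hasDerivAt_eq_zero_of_eq_mul {I : Set ℝ}
    (hI : I.OrdConnected) {g : ℝ → ℝ} (hg : ∀ t ∈ I, HasDerivAt g 0 t) {a b c : ℝ}
    (ha : a ∈ I) (hb : b ∈ I) (hc : c ≠ 1) (hab : g b = c * g a) {t : ℝ} (ht : t ∈ I) :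
    g t = 0 := by
  have hga : g a = 0 := by
    have : (c - 1) * g a = 0 := by rw [sub_mul, ← hab, hI.eq_of_hasDerivAt_eq_zero hg hb ha]; ring
    exact (mul_eq_zero.1 this).resolve_left (sub_ne_zero.2 hc)
  rw [hI.eq_of_hasDerivAt_eq_zero hg ht ha, hga]

theorem hasDerivAt_linearMap_comp_of_forall_dual {V E : Type*} [AddCommGroup V] [Module ℝ V]
    [Module.Finite ℝ V] [NormedAddCommGroup E] [NormedSpace ℝ E] {u : ℝ → V} {u' : V} {t : ℝ}
    (hu : ∀ f : V →ₗ[ℝ] ℝ, HasDerivAt (fun τ => f (u τ)) (f u') t) (Φ : V →ₗ[ℝ] E) :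
    HasDerivAt (fun τ => Φ (u τ)) (Φ u') t := by
  let b := Module.finBasis ℝ V
  have hcoord : HasDerivAt (fun τ => b.equivFun (u τ)) (b.equivFun u') t :=
    hasDerivAt_pi.2 fun i => hu (LinearMap.proj i ∘ₗ b.equivFun.toLinearMap)
  convert (LinearMap.toContinuousLinearMap (Φ ∘ₗ b.equivFun.symm.toLinearMap)).hasFDerivAt
    |>.comp_hasDerivAt t hcoord using 1
  · ext; simp
  · simp

theorem HasDerivAt.matrix_trace {𝕜 ι : Type*} [NontriviallyNormedField 𝕜] [Fintype ι]
    {X : 𝕜 → Matrix ι ι 𝕜} {X' : Matrix ι ι 𝕜} {t : 𝕜} (hX : HasDerivAt X X' t) :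
    HasDerivAt (fun τ => (X τ).trace) X'.trace t :=
  HasDerivAt.fun_sum fun i _ => hasDerivAt_pi.1 (hasDerivAt_pi.1 hX i) i

theorem Matrix.trace_mul_commutator_eq_zero {R ι : Type*} [CommRing R] [Fintype ι]
    [DecidableEq ι] {P X : Matrix ι ι R} (h : Commute P X) (Y : Matrix ι ι R) :
    (P * (X * Y - Y * X)).trace = 0 := by
  rw [mul_sub, trace_sub, ← mul_assoc, h.eq, mul_assoc, trace_mul_comm X, ← mul_assoc, sub_self]

-- Matrices have no global norm; any normed-algebra structure inducing the product topology
-- serves for the product rule.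
attribute [local instance] Matrix.linftyOpNormedRing Matrix.linftyOpNormedAlgebra

theorem Matrix.hasDerivAt_trace_pow_of_hasDerivAt_commutator {𝕜 ι : Type*}
    [NontriviallyNormedField 𝕜] [Fintype ι] [DecidableEq ι] {X : 𝕜 → Matrix ι ι 𝕜}
    {Y : Matrix ι ι 𝕜} {t : 𝕜} (hX : HasDerivAt X (X t * Y - Y * X t) t) (k : ℕ) :
    HasDerivAt (fun τ => (X τ ^ k).trace) 0 t := by
  convert (hX.fun_pow' k).matrix_trace using 1
  rw [trace_sum]
  refine (Finset.sum_eq_zero fun i _ => ?_).symm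
  rw [trace_mul_comm, ← mul_assoc, ← pow_add]
  exact trace_mul_commutator_eq_zero ((Commute.refl _).pow_left _) Y

namespace LieAlgebra

section adMatrix

attribute [local instance 100] LieRing.ofAssociativeRing

variable {R L ι : Type*} [CommRing R] [LieRing L] [LieAlgebra R L] [Fintype ι] [DecidableEq ι]
  (b : Module.Basis ι R L)

noncomputable def adMatrix : L →ₗ[R] Matrix ι ι R :=
  (LinearMap.toMatrixAlgEquiv b).toLinearMap ∘ₗ (ad R L).toLinearMap

theorem adMatrix_apply (x : L) : adMatrix b x = LinearMap.toMatrixAlgEquiv b (ad R L x) := rfl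

theorem adMatrix_lie (x y : L) :
    adMatrix b ⁅x, y⁆ = adMatrix b x * adMatrix b y - adMatrix b y * adMatrix b x := by
  rw [adMatrix_apply, LieHom.map_lie, Ring.lie_def, map_sub, map_mul, map_mul]
  rfl

theorem trace_adMatrix_pow (x : L) (k : ℕ) :
    (adMatrix b x ^ k).trace = LinearMap.trace R L (ad R L x ^ k) := by
  rw [adMatrix_apply, ← map_pow, LinearMap.trace_eq_matrix_trace R b]
  rfl

theorem trace_adMatrix_mul [Module.Free R L] [Module.Finite R L] (x y : L) :
    (adMatrix b x * adMatrix b y).trace = killingForm R L x y := by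
  rw [adMatrix_apply, adMatrix_apply, ← map_mul, killingForm_apply_apply,
    LinearMap.trace_eq_matrix_trace R b]
  rfl

end adMatrix

section EulerEquation

variable {L : Type*} [LieRing L] [LieAlgebra ℝ L] [Module.Finite ℝ L] (A : L ≃ₗ[ℝ] L)
  {u : ℝ → L} {t : ℝ}

theorem hasDerivAt_trace_ad_pow_of_euler
    (hu : ∀ f : L →ₗ[ℝ] ℝ, HasDerivAt (fun τ => f (u τ)) (f ⁅u t, A.symm (u t)⁆) t) (k : ℕ) :
    HasDerivAt (fun τ => LinearMap.trace ℝ L (ad ℝ L (u τ) ^ k)) 0 t := by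
  let b := Module.finBasis ℝ L
  have hX := hasDerivAt_linearMap_comp_of_forall_dual hu (adMatrix b)
  rw [adMatrix_lie] at hX
  simpa only [trace_adMatrix_pow] using Matrix.hasDerivAt_trace_pow_of_hasDerivAt_commutator hX k

theorem hasDerivAt_killingForm_of_euler
    (hA : ∀ x y : L, killingForm ℝ L (A x) y = killingForm ℝ L x (A y))
    (hu : ∀ f : L →ₗ[ℝ] ℝ, HasDerivAt (fun τ => f (u τ)) (f ⁅u t, A.symm (u t)⁆) t) :
    HasDerivAt (fun τ => killingForm ℝ L (u τ) (A.symm (u τ))) 0 t := by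
  let b := Module.finBasis ℝ L
  have hX := hasDerivAt_linearMap_comp_of_forall_dual hu (adMatrix b)
  have hY := hasDerivAt_linearMap_comp_of_forall_dual hu (adMatrix b ∘ₗ A.symm.toLinearMap)
  have h := (hX.fun_mul hY).matrix_trace
  simp only [LinearMap.comp_apply, LinearEquiv.coe_coe, Matrix.trace_add, trace_adMatrix_mul] at h
  refine h.congr_deriv ?_
  have hA_symm := hA (A.symm (u t)) (A.symm ⁅u t, A.symm (u t)⁆)
  rw [A.apply_symm_apply, A.apply_symm_apply] at hA_symm
  rw [hA_symm, LieModule.traceForm_comm ℝ L L (A.symm (u t)), LieModule.traceForm_apply_lie_apply]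
  simp

end EulerEquation

end LieAlgebra

theorem stmt12_general {L : Type*} [LieRing L] [LieAlgebra ℝ L] [Module.Finite ℝ L]
    (A : L ≃ₗ[ℝ] L)
    (hAsymm : ∀ x y : L, killingForm ℝ L (A x) y = killingForm ℝ L x (A y))
    (I : Set ℝ) (hI : I.OrdConnected)
    (u : ℝ → L)
    (hu : ∀ (f : L →ₗ[ℝ] ℝ), ∀ t ∈ I,
      HasDerivAt (fun τ => f (u τ)) (f ⁅u t, A.symm (u t)⁆) t)
    (s : ℝ) (hs : s ∈ I) (h0 : (0 : ℝ) ∈ I)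
    (r : ℝ) (hr : 0 < r) (hr1 : r ≠ 1)
    (hGCS : u s = r • u 0) :
    ∀ t ∈ I, killingForm ℝ L (u t) (A.symm (u t)) = 0 ∧
      IsNilpotent (LieAlgebra.ad ℝ L (u t)) := by
  have hr_pow {k : ℕ} (hk : k ≠ 0) : r ^ k ≠ 1 :=
    fun h => hr1 ((pow_eq_one_iff_of_nonneg hr.le hk).1 h)
  intro t ht
  constructor
  · refine hI.eq_zero_of_hasDerivAt_eq_zero_of_eq_mul
      (fun τ hτ => LieAlgebra.hasDerivAt_killingForm_of_euler A hAsymm (hu · τ hτ))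
      h0 hs (hr_pow two_ne_zero) ?_ ht
    simp only [hGCS, map_smul, LinearMap.smul_apply, smul_eq_mul]
    ring
  · refine Module.End.isNilpotent_of_forall_trace_pow_eq_zero fun k hk =>
      hI.eq_zero_of_hasDerivAt_eq_zero_of_eq_mul
        (fun τ hτ => LieAlgebra.hasDerivAt_trace_ad_pow_of_euler A (hu · τ hτ) k)
        h0 hs (hr_pow hk) ?_ ht
    rw [hGCS, map_smul, smul_pow, map_smul, smul_eq_mul]

/-- If `u` is a generalized conical spiral of the Euler field `F(x) = [x, A⁻¹x]`
with ratio `r ≠ 1` (`u s = r • u 0`, `r > 0`), then `K(u t, A⁻¹(u t)) = 0` for all `t`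
and `ad (u t)` is nilpotent for all `t` in the domain. -/
theorem stmt12 {L : Type*} [LieRing L] [LieAlgebra ℝ L] [Module.Finite ℝ L]
    [LieAlgebra.IsSemisimple ℝ L]
    (A : L ≃ₗ[ℝ] L)
    (hAsymm : ∀ x y : L, killingForm ℝ L (A x) y = killingForm ℝ L x (A y))
    (I : Set ℝ) (hI : I.OrdConnected)
    (u : ℝ → L)
    (hu : ∀ (f : L →ₗ[ℝ] ℝ), ∀ t ∈ I,
      HasDerivAt (fun τ => f (u τ)) (f ⁅u t, A.symm (u t)⁆) t)
    (s : ℝ) (hs : s ∈ I) (h0 : (0 : ℝ) ∈ I)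
    (r : ℝ) (hr : 0 < r) (hr1 : r ≠ 1)
    (hGCS : u s = r • u 0) :
    ∀ t ∈ I, killingForm ℝ L (u t) (A.symm (u t)) = 0 ∧
      IsNilpotent (LieAlgebra.ad ℝ L (u t)) :=
  stmt12_general A hAsymm I hI u hu s hs h0 r hr hr1 hGCS
end
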